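/- arXiv:1710.05481 — 2 statements merged into one kernel-verified Lean document; each statement's English description precedes it below -/
import Mathlib

section
/- For every field F, every integer d ≥ 1, every π ∈ {1,2}^d and every a ∈ {0,1}^d, the partial derivative matrix M_{(Y,Z)}(IMM_d|_{ρ_{π,a}}) has rank exactly 2^m over F, where Y = {y_1,…,y_{⌈|A|/2⌉}}, Z = {z_1,…,z_{⌊|A|/2⌋}} are the live variables of ρ_{π,a} and m = |Z| = ⌊|A|/2⌋. -/
open MvPolynomial

/-- The variable set `X = {x^(i)_{u,v}}`: index `i ∈ Fin d`, entries `u,v ∈ Fin 2`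
(value `0` of `Fin 2` represents `1`, value `1` represents `2`). -/
abbrev IMMVar (d : ℕ) : Type := Fin d × Fin 2 × Fin 2

/-- The matrix `M^(i)` of variables. -/
noncomputable def IMMMat (F : Type) [CommSemiring F] (d : ℕ) (i : Fin d) :
    Matrix (Fin 2) (Fin 2) (MvPolynomial (IMMVar d) F) :=
  Matrix.of fun u v => X (i, u, v)

/-- The iterated matrix multiplication polynomial `IMM_d = M(1,1) + M(1,2)`,
where `M = M^(1) ⋯ M^(d)`. -/
noncomputable def IMMPoly (F : Type) [CommSemiring F] (d : ℕ) :
    MvPolynomial (IMMVar d) F :=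
  (List.ofFn (IMMMat F d)).prod 0 0 + (List.ofFn (IMMMat F d)).prod 0 1

/-- `π(i−1)`, with the convention `π(0) = 1` (represented by `0 : Fin 2`). -/
def prevOf {d : ℕ} (π : Fin d → Fin 2) (i : Fin d) : Fin 2 :=
  if _ : (i : ℕ) = 0 then 0 else π ⟨(i : ℕ) - 1, by have := i.isLt; omega⟩

/-- The number of indices `k ∈ A` (i.e. `a k = true`) with `k < i`; if `i ∈ A` is the
`j`-th smallest element of `A` (1-indexed), then `posIn a i = j − 1`. -/
def posIn {d : ℕ} (a : Fin d → Bool) (i : Fin d) : ℕ :=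
  (Finset.univ.filter fun k => a k = true ∧ k < i).card

/-- `|A|` where `A = {i ∈ {1,…,d} : a_i = 1}`. -/
def cardA {d : ℕ} (a : Fin d → Bool) : ℕ :=
  (Finset.univ.filter fun i => a i = true).card

/-- The restriction `ρ_{π,a}`, sending each variable `x^(i)_{u,v}` to a fresh
variable (`Sum.inl k` represents `y_{k+1}`, `Sum.inr k` represents `z_{k+1}`) or a
constant in `{0,1}`: if `i ∉ A`, the matrix `M^(i)` is set to the identity matrix when
`π(i−1) = π(i)` and to the flip permutation matrix otherwise; if `i` is the `j`-th
smallest element of `A` with `j` odd (i.e. `posIn a i` even), then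
`x^(i)_{π(i−1),π(i)} ↦ y_{⌈j/2⌉}`, `x^(i)_{π(i−1),π(i)'} ↦ 1` and the rest to `0`;
if `j` is even, then `x^(i)_{π(i−1),π(i)} ↦ z_{j/2}`, `x^(i)_{π(i−1)',π(i)} ↦ 1` and
the rest to `0`. The restricted polynomial `f|_ρ` is `MvPolynomial.aeval (rho F π a) f`. -/
noncomputable def rho (F : Type) [CommSemiring F] {d : ℕ} (π : Fin d → Fin 2)
    (a : Fin d → Bool) (x : IMMVar d) : MvPolynomial (ℕ ⊕ ℕ) F :=
  let i := x.1
  let u := x.2.1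
  let v := x.2.2
  let p := prevOf π i
  if a i = true then
    if u = p ∧ v = π i then
      X (if posIn a i % 2 = 0 then Sum.inl (posIn a i / 2) else Sum.inr (posIn a i / 2))
    else if posIn a i % 2 = 0 then
      (if u = p ∧ v ≠ π i then 1 else 0)
    else
      (if u ≠ p ∧ v = π i then 1 else 0)
  else
    if (u = v) ↔ (p = π i) then 1 else 0

/-- The partial derivative matrix `M_{(Y,Z)}(g)`: rows indexed by subsets `S ⊆ Y`,
columns by subsets `T ⊆ Z`, with `(S,T)` entry the coefficient in `g` of the monomial
`∏_{y∈S} y · ∏_{z∈T} z`. (Left summands of `V ⊕ W` are the `Y`-side variables,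
right summands the `Z`-side variables.) -/
noncomputable def pdMatrix (F : Type) [CommSemiring F] {V W : Type}
    (Y : Finset V) (Z : Finset W) (g : MvPolynomial (V ⊕ W) F) :
    Matrix {S // S ∈ Y.powerset} {T // T ∈ Z.powerset} F :=
  fun S T => MvPolynomial.coeff
    ((S.1.sum fun y => Finsupp.single (Sum.inl y) 1) +
     (T.1.sum fun z => Finsupp.single (Sum.inr z) 1)) g

/-!
Under `ρ` every factor `M^(i)` becomes a `0/1` permutation matrix (`i ∉ A`) or a matrix with a
single live variable, and tracking the first row of the prefix products shows
`IMM_d|_ρ = ∏_{s ≤ m} (y_s z_s + 1)`, times `y_{m+1} + 1` when `|A|` is odd. Hence for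
`S ⊆ {y_1,…,y_m}` the coefficient of `y_S z_T` is `[S = T]`: the rows of `M_{(Y,Z)}` indexed
by these `2^m` sets form the identity matrix, and there are only `2^m` columns.
-/

open Finset Matrix

section Indexing

variable {d : ℕ} (π : Fin d → Fin 2) (a : Fin d → Bool)

def countBelow (k : ℕ) : ℕ :=
  #{i | a i = true ∧ (i : ℕ) < k}

lemma countBelow_eq_posIn (i : Fin d) : countBelow a i = posIn a i := rfl

lemma countBelow_zero : countBelow a 0 = 0 := by
  simp [countBelow]

lemma countBelow_succ {k : ℕ} (hk : k < d) :
    countBelow a (k + 1) = countBelow a k + (a ⟨k, hk⟩).toNat := by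
  have split : ∀ i : Fin d, (if a i = true ∧ (i : ℕ) < k + 1 then 1 else 0) =
      (if a i = true ∧ (i : ℕ) < k then 1 else 0) +
        if i = ⟨k, hk⟩ then (a ⟨k, hk⟩).toNat else 0 := by
    intro i
    by_cases hi : (i : ℕ) = k
    · obtain rfl : i = ⟨k, hk⟩ := Fin.ext hi
      cases a ⟨k, hk⟩ <;> simp
    · simp [Fin.ext_iff, hi, Nat.lt_iff_le_and_ne]
  simp only [countBelow, card_filter, sum_congr rfl fun i _ => split i, sum_add_distrib,
    Fintype.sum_ite_eq']

lemma countBelow_eq_cardA : countBelow a d = cardA a := by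
  simp [countBelow, cardA]

/-- `prevOf` extended to all `k : ℕ`: `π(k)` in the paper's 1-based indexing,
with `π(0) = 1`. -/
def prevAt (k : ℕ) : Fin 2 :=
  if h : k = 0 ∨ d < k then 0 else π ⟨k - 1, by omega⟩

lemma prevAt_eq_prevOf (i : Fin d) : prevAt π i = prevOf π i := by
  have := i.isLt
  unfold prevAt prevOf
  split_ifs <;> first | rfl | omega

lemma prevAt_succ {k : ℕ} (hk : k < d) :
    prevAt π (k + 1) = π ⟨k, hk⟩ := by
  simp [prevAt, show ¬ d < k + 1 by omega]

end Indexing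

section RestrictedProduct

variable (F : Type) [CommSemiring F] {d : ℕ} (π : Fin d → Fin 2) (a : Fin d → Bool)

noncomputable def pairProd (m : ℕ) : MvPolynomial (ℕ ⊕ ℕ) F :=
  ∏ s ∈ range m, (X (Sum.inl s) * X (Sum.inr s) + 1)

/-- Row `1` of the product of the first `k` restricted matrices, for `c` the number of indices
of `A` among them and `q = π(k)`: after an even number of them only column `q` is nonzero;
after an odd number a pending `y` sits in column `q` and a `1` in the other column. -/
noncomputable def prefixRow (c : ℕ) (q j : Fin 2) : MvPolynomial (ℕ ⊕ ℕ) F :=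
  pairProd F (c / 2) *
    if c % 2 = 0 then (if j = q then 1 else 0) else (if j = q then X (Sum.inl (c / 2)) else 1)

lemma vecMul_prefixRow (i : Fin d) :
    prefixRow F (posIn a i) (prevOf π i) ᵥ* (IMMMat F d i).map (aeval (rho F π a)) =
      prefixRow F (posIn a i + (a i).toNat) (π i) := by
  funext j
  simp only [vecMul_eq_sum, Fin.sum_univ_two, Finset.sum_apply, Pi.smul_apply, smul_eq_mul,
    map_apply, IMMMat, of_apply, aeval_X, rho]
  generalize posIn a i = c, prevOf π i = p, π i = q
  cases a i
  · fin_cases p <;> fin_cases q <;> fin_cases j <;> simp [prefixRow]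
  · by_cases hc : c % 2 = 0
    · have h1 : (c + 1) % 2 = 1 := by omega
      have h2 : (c + 1) / 2 = c / 2 := by omega
      fin_cases p <;> fin_cases q <;> fin_cases j <;> simp [prefixRow, hc, h1, h2]
    · have h1 : (c + 1) % 2 = 0 := by omega
      have h2 : (c + 1) / 2 = c / 2 + 1 := by omega
      fin_cases p <;> fin_cases q <;> fin_cases j <;>
        simp [prefixRow, hc, h1, h2, pairProd, prod_range_succ] <;> ring

lemma prod_take_row_zero {k : ℕ} (hk : k ≤ d) :
    ((List.ofFn fun i => (IMMMat F d i).map (aeval (rho F π a))).take k).prod 0 =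
      prefixRow F (countBelow a k) (prevAt π k) := by
  induction k with
  | zero =>
    funext j
    simp [countBelow_zero, prevAt, prefixRow, pairProd, one_apply, eq_comm]
  | succ k ih =>
    have step := vecMul_prefixRow F π a ⟨k, hk⟩
    rw [← countBelow_eq_posIn, ← prevAt_eq_prevOf] at step
    rw [List.prod_take_succ _ _ (by simp; omega), mul_apply_eq_vecMul, ih (by omega),
      List.getElem_ofFn, step, countBelow_succ a hk, prevAt_succ π hk]

lemma prefixRow_zero_add_one (c : ℕ) (q : Fin 2) :
    prefixRow F c q 0 + prefixRow F c q 1 =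
      pairProd F (c / 2) * if c % 2 = 0 then 1 else X (Sum.inl (c / 2)) + 1 := by
  fin_cases q <;> by_cases hc : c % 2 = 0 <;> simp [prefixRow, hc] <;> ring

lemma aeval_rho_IMMPoly :
    aeval (rho F π a) (IMMPoly F d) =
      pairProd F (cardA a / 2) *
        if cardA a % 2 = 0 then 1 else X (Sum.inl (cardA a / 2)) + 1 := by
  have hprod : ∀ u v, aeval (rho F π a) ((List.ofFn (IMMMat F d)).prod u v) =
      (List.ofFn fun i => (IMMMat F d i).map (aeval (rho F π a))).prod u v := by
    intro u v
    change (aeval (rho F π a)).mapMatrix (List.ofFn (IMMMat F d)).prod u v = _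
    rw [map_list_prod, List.map_ofFn]
    rfl
  have hrow := prod_take_row_zero F π a le_rfl
  rw [List.take_of_length_le (by simp), countBelow_eq_cardA] at hrow
  rw [IMMPoly, map_add, hprod, hprod, hrow, prefixRow_zero_add_one]

end RestrictedProduct

section PartialDerivativeMatrix

variable {V W : Type*}

noncomputable def pdExponent (S : Finset V) (T : Finset W) : V ⊕ W →₀ ℕ :=
  (S.sum fun y => Finsupp.single (Sum.inl y) 1) + (T.sum fun z => Finsupp.single (Sum.inr z) 1)

lemma pdExponent_inl [DecidableEq V] (S : Finset V) (T : Finset W) (v : V) :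
    pdExponent S T (Sum.inl v) = if v ∈ S then 1 else 0 := by
  simp [pdExponent, Finsupp.single_apply_left Sum.inl_injective, Finsupp.single_apply]

lemma pdExponent_inr [DecidableEq W] (S : Finset V) (T : Finset W) (w : W) :
    pdExponent S T (Sum.inr w) = if w ∈ T then 1 else 0 := by
  simp [pdExponent, Finsupp.single_apply_left Sum.inr_injective, Finsupp.single_apply]

lemma pdExponent_inj {S S' : Finset V} {T T' : Finset W} :
    pdExponent S T = pdExponent S' T' ↔ S = S' ∧ T = T' := by
  classical
  refine ⟨fun h => ⟨?_, ?_⟩, fun h => h.1 ▸ h.2 ▸ rfl⟩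
  · ext v
    have := DFunLike.congr_fun h (Sum.inl v)
    simp only [pdExponent_inl] at this
    split_ifs at this <;> simp_all
  · ext w
    have := DFunLike.congr_fun h (Sum.inr w)
    simp only [pdExponent_inr] at this
    split_ifs at this <;> simp_all

end PartialDerivativeMatrix

section Coefficients

variable (F : Type) [CommSemiring F]

lemma pairProd_eq_sum (m : ℕ) :
    pairProd F m = ∑ U ∈ (range m).powerset, monomial (pdExponent U U) 1 := by
  rw [pairProd, prod_add]
  refine sum_congr rfl fun U _ => ?_
  simp only [prod_const_one, mul_one, pdExponent, ← sum_add_distrib, monomial_sum_one, X,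
    monomial_mul]

lemma coeff_pdExponent_pairProd {m : ℕ} {S : Finset ℕ} (hS : S ⊆ range m) (T : Finset ℕ) :
    coeff (pdExponent S T) (pairProd F m) = if S = T then 1 else 0 := by
  classical
  simp only [pairProd_eq_sum, coeff_sum, coeff_monomial, pdExponent_inj]
  split_ifs with hST
  · subst hST
    simp [hS]
  · exact sum_eq_zero fun U _ => if_neg fun h => hST (h.1.symm.trans h.2)

lemma coeff_pdExponent_aeval_rho_IMMPoly {d : ℕ} (π : Fin d → Fin 2) (a : Fin d → Bool)
    {S : Finset ℕ} (hS : S ⊆ range (cardA a / 2)) (T : Finset ℕ) :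
    coeff (pdExponent S T) (aeval (rho F π a) (IMMPoly F d)) = if S = T then 1 else 0 := by
  classical
  have hy : Sum.inl (cardA a / 2) ∉ (pdExponent S T).support := by
    simpa [pdExponent_inl] using fun h => by simpa using hS h
  rw [aeval_rho_IMMPoly]
  by_cases hc : cardA a % 2 = 0
  · rw [if_pos hc, mul_one, coeff_pdExponent_pairProd F hS]
  · rw [if_neg hc, mul_add, mul_one, coeff_add, coeff_mul_X', if_neg hy, zero_add,
      coeff_pdExponent_pairProd F hS]

end Coefficients

theorem Matrix.rank_eq_card_of_submatrix_eq_one {m n R : Type*} [Fintype m] [Fintype n]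
    [DecidableEq n] [CommRing R] [StrongRankCondition R] (A : Matrix m n R) (r : n → m)
    (h : A.submatrix r id = 1) : A.rank = Fintype.card n :=
  le_antisymm A.rank_le_card_width <| by
    simpa [h, Matrix.rank_one] using A.rank_submatrix_le r id

theorem stmt_9_general (F : Type) [Field F] (d : ℕ)
    (π : Fin d → Fin 2) (a : Fin d → Bool) :
    (pdMatrix F (Finset.range ((cardA a + 1) / 2)) (Finset.range (cardA a / 2))
        (MvPolynomial.aeval (rho F π a) (IMMPoly F d))).rank = 2 ^ (cardA a / 2) := by
  have hZY : range (cardA a / 2) ⊆ range ((cardA a + 1) / 2) := range_subset_range.mpr (by omega)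
  rw [Matrix.rank_eq_card_of_submatrix_eq_one _
      (fun T => ⟨T.1, mem_powerset.mpr ((mem_powerset.mp T.2).trans hZY)⟩),
    Fintype.card_coe, card_powerset, card_range]
  ext S T
  exact (coeff_pdExponent_aeval_rho_IMMPoly F π a (mem_powerset.mp S.2) T).trans
    (if_congr Subtype.ext_iff.symm rfl rfl)

/-- For every field `F`, every `d ≥ 1`, every `π ∈ {1,2}^d` and every
`a ∈ {0,1}^d`, the partial derivative matrix `M_{(Y,Z)}(IMM_d|_{ρ_{π,a}})` has rank
exactly `2^m`, where `Y = {y_1,…,y_⌈|A|/2⌉}`, `Z = {z_1,…,z_⌊|A|/2⌋}` and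
`m = ⌊|A|/2⌋`. (Here the `Y`-variables are `Sum.inl k` for `k < ⌈|A|/2⌉` and the
`Z`-variables are `Sum.inr k` for `k < ⌊|A|/2⌋`.) -/
theorem stmt_9 (F : Type) [Field F] (d : ℕ) (hd : 1 ≤ d)
    (π : Fin d → Fin 2) (a : Fin d → Bool) :
    (pdMatrix F (Finset.range ((cardA a + 1) / 2)) (Finset.range (cardA a / 2))
        (MvPolynomial.aeval (rho F π a) (IMMPoly F d))).rank = 2 ^ (cardA a / 2) :=
  stmt_9_general F d π a
end

section
/- Let F be a field and t ≥ 1. Let Y = Y_1 ∪ ⋯ ∪ Y_t and Z = Z_1 ∪ ⋯ ∪ Z_t be finite disjoint variable sets, where the sets Y_1,…,Y_t are pairwise disjoint and the sets Z_1,…,Z_t are pairwise disjoint. For each i let g_i ∈ F[Y_i ∪ Z_i] be a multilinear polynomial and let g = g_1 ⋯ g_t. If ℓ = |{i ∈ {1,…,t} : |Y_i| ≠ |Z_i|}|, then rank(M_{(Y,Z)}(g)) ≤ 2^{(|Y| + |Z| − ℓ)/2}. -/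
open MvPolynomial

/-- A polynomial is multilinear if its degree in each variable is at most `1`. -/
def IsMultilinearPoly {F V : Type} [CommSemiring F] (p : MvPolynomial V F) : Prop :=
  ∀ v, p.degreeOf v ≤ 1

/-! Since the `gᵢ` live on pairwise disjoint sets of variables, the `(S, T)` entry of `M(∏ gᵢ)` is
`∏ᵢ M(gᵢ)(S ∩ Yᵢ, T ∩ Zᵢ)`. A matrix whose entries are such products of entries of matrices
`Nᵢ = AᵢBᵢ` factors through the product of the inner index sets, and each `Nᵢ` factors trivially
through its smaller side. Hence `rank M(g) ≤ ∏ᵢ 2 ^ min(|Yᵢ|, |Zᵢ|)`, and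
`2 min(a, b) ≤ a + b - [a ≠ b]`. -/
namespace Matrix

theorem rank_le_prod_card_of_apply_eq_prod_mul {ι R m n : Type*} [Fintype ι] [DecidableEq ι]
    [CommSemiring R] [StrongRankCondition R] [Fintype n] {α β κ : ι → Type*} [∀ i, Fintype (κ i)]
    (M : Matrix m n R) (A : ∀ i, Matrix (α i) (κ i) R) (B : ∀ i, Matrix (κ i) (β i) R)
    (p : m → ∀ i, α i) (q : n → ∀ i, β i)
    (hM : ∀ S T, M S T = ∏ i, (A i * B i) (p S i) (q T i)) :
    M.rank ≤ ∏ i, Fintype.card (κ i) := by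
  have hAB : M = (of fun S k => ∏ i, A i (p S i) (k i) : Matrix m (∀ i, κ i) R) *
      (of fun k T => ∏ i, B i (k i) (q T i) : Matrix (∀ i, κ i) n R) := by
    ext S T
    simp only [hM, mul_apply, of_apply, Fintype.prod_sum, Finset.prod_mul_distrib]
  rw [hAB, ← Fintype.card_pi]
  exact (rank_mul_le_left _ _).trans (rank_le_card_width _)

theorem exists_mul_eq_fin_min_card {R α β : Type*} [Fintype α] [Fintype β] [DecidableEq α]
    [DecidableEq β] [Semiring R] (N : Matrix α β R) :
    ∃ (A : Matrix α (Fin (min (Fintype.card α) (Fintype.card β))) R)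
      (B : Matrix (Fin (min (Fintype.card α) (Fintype.card β))) β R), A * B = N := by
  rcases le_total (Fintype.card α) (Fintype.card β) with h | h
  · let e := Fintype.equivFinOfCardEq (min_eq_left h).symm
    refine ⟨(1 : Matrix α α R).submatrix id e.symm, N.submatrix e.symm id, ?_⟩
    rw [submatrix_mul_equiv, submatrix_id_id, Matrix.one_mul]
  · let e := Fintype.equivFinOfCardEq (min_eq_right h).symm
    refine ⟨N.submatrix id e.symm, (1 : Matrix β β R).submatrix e.symm id, ?_⟩
    rw [submatrix_mul_equiv, submatrix_id_id, Matrix.mul_one]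

theorem rank_le_prod_min_card_of_apply_eq_prod {ι R m n : Type*} [Fintype ι] [DecidableEq ι]
    [CommSemiring R] [StrongRankCondition R] [Fintype n] {α β : ι → Type*} [∀ i, Fintype (α i)]
    [∀ i, Fintype (β i)] [∀ i, DecidableEq (α i)] [∀ i, DecidableEq (β i)]
    (M : Matrix m n R) (N : ∀ i, Matrix (α i) (β i) R)
    (p : m → ∀ i, α i) (q : n → ∀ i, β i) (hM : ∀ S T, M S T = ∏ i, N i (p S i) (q T i)) :
    M.rank ≤ ∏ i, min (Fintype.card (α i)) (Fintype.card (β i)) := by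
  choose A B hAB using fun i => exists_mul_eq_fin_min_card (N i)
  simpa using rank_le_prod_card_of_apply_eq_prod_mul M A B p q fun S T => by simp only [hAB, hM]

end Matrix

theorem Finsupp.eq_of_add_eq_add_of_disjoint {σ M : Type*} [AddZeroClass M] {A B : Set σ}
    (hAB : Disjoint A B) {x y a b : σ →₀ M} (hx : ↑x.support ⊆ A) (ha : ↑a.support ⊆ A)
    (hy : ↑y.support ⊆ B) (hb : ↑b.support ⊆ B) (h : x + y = a + b) : x = a := by
  rw [Finsupp.support_subset_iff] at hx ha hy hb
  ext v
  have hv := DFunLike.congr_fun h v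
  simp only [Finsupp.coe_add, Pi.add_apply] at hv
  by_cases hvA : v ∈ A
  · have hvB : v ∉ B := Set.disjoint_left.mp hAB hvA
    rwa [hy v hvB, hb v hvB, add_zero, add_zero] at hv
  · rw [hx v hvA, ha v hvA]

namespace MvPolynomial

variable {R σ : Type*} [CommSemiring R]

theorem support_subset_of_coeff_ne_zero {s : Set σ} {p : MvPolynomial σ R}
    (hp : p ∈ supported R s) {x : σ →₀ ℕ} (hx : coeff x p ≠ 0) : ↑x.support ⊆ s := by
  classical
  exact (Finset.coe_subset.2 (support_subset_vars_of_mem_support (mem_support_iff.2 hx))).trans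
    (mem_supported.1 hp)

theorem coeff_add_mul_of_disjoint {A B : Set σ} (hAB : Disjoint A B)
    {p q : MvPolynomial σ R} (hp : p ∈ supported R A) (hq : q ∈ supported R B)
    {a b : σ →₀ ℕ} (ha : ↑a.support ⊆ A) (hb : ↑b.support ⊆ B) :
    coeff (a + b) (p * q) = coeff a p * coeff b q := by
  classical
  rw [coeff_mul, Finset.sum_eq_single (a, b)]
  · rintro ⟨x, y⟩ hxy hne
    by_contra h
    have hxy' : x + y = a + b := Finset.HasAntidiagonal.mem_antidiagonal.mp hxy
    have hxa : x = a := Finsupp.eq_of_add_eq_add_of_disjoint hAB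
      (support_subset_of_coeff_ne_zero hp (left_ne_zero_of_mul h)) ha
      (support_subset_of_coeff_ne_zero hq (right_ne_zero_of_mul h)) hb hxy'
    subst hxa
    exact hne (Prod.ext rfl (add_left_cancel hxy'))
  · simp

theorem coeff_sum_prod_of_pairwiseDisjoint {ι : Type*} [DecidableEq ι] (s : Finset ι)
    {A : ι → Set σ} (hA : (s : Set ι).PairwiseDisjoint A) {p : ι → MvPolynomial σ R}
    (hp : ∀ i ∈ s, p i ∈ supported R (A i)) {m : ι → σ →₀ ℕ}
    (hm : ∀ i ∈ s, ↑(m i).support ⊆ A i) :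
    coeff (∑ i ∈ s, m i) (∏ i ∈ s, p i) = ∏ i ∈ s, coeff (m i) (p i) := by
  classical
  induction s using Finset.induction_on with
  | empty => simp
  | @insert a s has ih =>
    rw [Finset.coe_insert, Set.pairwiseDisjoint_insert] at hA
    simp only [Finset.mem_insert, forall_eq_or_imp] at hp hm
    have hdisj : Disjoint (A a) (⋃ i ∈ s, A i) :=
      Set.disjoint_iUnion₂_right.2 fun i hi => hA.2 i hi (ne_of_mem_of_not_mem hi has).symm
    have hps : ∏ i ∈ s, p i ∈ supported R (⋃ i ∈ s, A i) :=
      Subalgebra.prod_mem _ fun i hi => supported_mono (Set.subset_biUnion_of_mem hi) (hp.2 i hi)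
    have hms : ↑(∑ i ∈ s, m i).support ⊆ ⋃ i ∈ s, A i := by
      refine (Finset.coe_subset.2 Finsupp.support_finsetSum).trans ?_
      simpa using fun i hi => (hm.2 i hi).trans (Set.subset_biUnion_of_mem hi)
    rw [Finset.sum_insert has, Finset.prod_insert has, Finset.prod_insert has,
      coeff_add_mul_of_disjoint hdisj hp.1 hps hm.1 hms, ih hA.1 hp.2 hm.2]

end MvPolynomial

open Function

theorem Finset.sum_eq_sum_inter_of_subset_biUnion {ι α M : Type*} [Fintype ι] [DecidableEq α]
    [AddCommMonoid M] {Y : ι → Finset α} (hY : Pairwise (Disjoint on Y)) {S : Finset α}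
    (hS : S ⊆ univ.biUnion Y) (f : α → M) :
    ∑ x ∈ S, f x = ∑ i, ∑ x ∈ S ∩ Y i, f x := by
  calc ∑ x ∈ S, f x = ∑ x ∈ univ.biUnion fun i => S ∩ Y i, f x := by
        rw [← inter_biUnion, inter_eq_left.2 hS]
    _ = ∑ i, ∑ x ∈ S ∩ Y i, f x :=
        sum_biUnion fun i _ j _ hij => (hY hij).mono inter_subset_right inter_subset_right

section PartialDerivativeMatrix

variable {V W : Type}

noncomputable def subsetExponent (S : Finset V) (T : Finset W) : V ⊕ W →₀ ℕ :=
  (S.sum fun y => Finsupp.single (Sum.inl y) 1) + (T.sum fun z => Finsupp.single (Sum.inr z) 1)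

theorem pdMatrix_apply (F : Type) [CommSemiring F] (Y : Finset V) (Z : Finset W)
    (g : MvPolynomial (V ⊕ W) F) (S : {S // S ∈ Y.powerset}) (T : {T // T ∈ Z.powerset}) :
    pdMatrix F Y Z g S T = coeff (subsetExponent S.1 T.1) g :=
  rfl

theorem support_subsetExponent_subset (S : Finset V) (T : Finset W) :
    ↑(subsetExponent S T).support ⊆ Sum.inl '' (S : Set V) ∪ Sum.inr '' (T : Set W) := by
  classical
  rw [Finsupp.support_subset_iff]
  rintro (y | z) hv <;> simp_all [subsetExponent, Finsupp.single_apply]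

theorem subsetExponent_eq_sum_inter {ι : Type*} [Fintype ι] [DecidableEq V] [DecidableEq W]
    {Y : ι → Finset V} {Z : ι → Finset W} (hY : Pairwise (Disjoint on Y))
    (hZ : Pairwise (Disjoint on Z)) {S : Finset V} {T : Finset W}
    (hS : S ⊆ Finset.univ.biUnion Y) (hT : T ⊆ Finset.univ.biUnion Z) :
    subsetExponent S T = ∑ i, subsetExponent (S ∩ Y i) (T ∩ Z i) := by
  simp only [subsetExponent, Finset.sum_add_distrib,
    ← Finset.sum_eq_sum_inter_of_subset_biUnion hY hS,
    ← Finset.sum_eq_sum_inter_of_subset_biUnion hZ hT]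

theorem pdMatrix_prod_apply {F ι : Type} [CommSemiring F] [Fintype ι] [DecidableEq V]
    [DecidableEq W] {Y : ι → Finset V} {Z : ι → Finset W} (hY : Pairwise (Disjoint on Y))
    (hZ : Pairwise (Disjoint on Z)) {g : ι → MvPolynomial (V ⊕ W) F}
    (hg : ∀ i, g i ∈ supported F (Sum.inl '' ↑(Y i) ∪ Sum.inr '' ↑(Z i)))
    (S : {S // S ∈ (Finset.univ.biUnion Y).powerset})
    (T : {T // T ∈ (Finset.univ.biUnion Z).powerset}) :
    pdMatrix F (Finset.univ.biUnion Y) (Finset.univ.biUnion Z) (∏ i, g i) S T =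
      ∏ i, pdMatrix F (Y i) (Z i) (g i) ⟨S.1 ∩ Y i, Finset.mem_powerset.2 Finset.inter_subset_right⟩
        ⟨T.1 ∩ Z i, Finset.mem_powerset.2 Finset.inter_subset_right⟩ := by
  classical
  have hdisj : (↑(Finset.univ : Finset ι) : Set ι).PairwiseDisjoint
      fun i => Sum.inl '' (Y i : Set V) ∪ Sum.inr '' (Z i : Set W) := by
    intro i _ j _ hij
    simp only [onFun, Set.disjoint_union_left, Set.disjoint_union_right,
      Set.disjoint_image_iff Sum.inl_injective, Set.disjoint_image_iff Sum.inr_injective,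
      Finset.disjoint_coe, hY hij, hZ hij, true_and, and_true]
    exact ⟨Set.disjoint_left.2 (by simp), Set.disjoint_left.2 (by simp)⟩
  rw [pdMatrix_apply, subsetExponent_eq_sum_inter hY hZ (Finset.mem_powerset.1 S.2)
    (Finset.mem_powerset.1 T.2)]
  exact coeff_sum_prod_of_pairwiseDisjoint _ hdisj (fun i _ => hg i)
    fun i _ => (support_subsetExponent_subset _ _).trans <|
      Set.union_subset_union (Set.image_mono (by simp)) (Set.image_mono (by simp))

end PartialDerivativeMatrix

theorem Finset.two_mul_sum_min_add_card_ne_le {ι : Type*} (s : Finset ι) (a b : ι → ℕ) :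
    2 * ∑ i ∈ s, min (a i) (b i) + (s.filter fun i => a i ≠ b i).card ≤
      ∑ i ∈ s, a i + ∑ i ∈ s, b i := by
  rw [card_filter, mul_sum, ← sum_add_distrib, ← sum_add_distrib]
  refine sum_le_sum fun i _ => ?_
  split_ifs <;> omega

theorem stmt_18_general (F : Type) [Field F] (t : ℕ)
    {V W : Type} [DecidableEq V] [DecidableEq W]
    (Y : Fin t → Finset V) (Z : Fin t → Finset W)
    (hY : ∀ i j, i ≠ j → Disjoint (Y i) (Y j))
    (hZ : ∀ i j, i ≠ j → Disjoint (Z i) (Z j))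
    (g : Fin t → MvPolynomial (V ⊕ W) F)
    (hsupp : ∀ i, g i ∈ MvPolynomial.supported F
      ((Sum.inl '' ↑(Y i)) ∪ (Sum.inr '' ↑(Z i)))) :
    ((pdMatrix F (Finset.univ.biUnion Y) (Finset.univ.biUnion Z) (∏ i, g i)).rank : ℝ)
      ≤ (2 : ℝ) ^ ((((Finset.univ.biUnion Y).card : ℝ) +
          ((Finset.univ.biUnion Z).card : ℝ) -
          ((Finset.univ.filter fun i => (Y i).card ≠ (Z i).card).card : ℝ)) / 2) := by
  set k := ∑ i, min (Y i).card (Z i).card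
  have hrank : (pdMatrix F (Finset.univ.biUnion Y) (Finset.univ.biUnion Z) (∏ i, g i)).rank
      ≤ 2 ^ k := by
    refine (Matrix.rank_le_prod_min_card_of_apply_eq_prod _ _ _ _
      (pdMatrix_prod_apply (fun i j => hY i j) (fun i j => hZ i j) hsupp)).trans_eq ?_
    simp only [Fintype.card_coe, Finset.card_powerset, Finset.prod_pow_eq_pow_sum, k,
      ← (pow_right_mono₀ (one_le_two (α := ℕ))).map_min]
  have hk : 2 * k + (Finset.univ.filter fun i => (Y i).card ≠ (Z i).card).card ≤
      (Finset.univ.biUnion Y).card + (Finset.univ.biUnion Z).card := by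
    rw [Finset.card_biUnion fun i _ j _ => hY i j, Finset.card_biUnion fun i _ j _ => hZ i j]
    exact Finset.two_mul_sum_min_add_card_ne_le _ _ _
  calc _ ≤ (2 : ℝ) ^ (k : ℝ) := by exact_mod_cast hrank
    _ ≤ _ := by
      refine Real.rpow_le_rpow_of_exponent_le one_le_two ?_
      rw [le_div_iff₀ two_pos]
      have hk' := (Nat.cast_le (α := ℝ)).2 hk
      push_cast at hk'
      linarith

/-- setup as in the rank-multiplicativity statement; if
`ℓ = |{i : |Y_i| ≠ |Z_i|}|` then `rank(M_{(Y,Z)}(g)) ≤ 2^((|Y| + |Z| − ℓ)/2)`,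
as real numbers. -/
theorem stmt_18 (F : Type) [Field F] (t : ℕ) (ht : 1 ≤ t)
    {V W : Type} [DecidableEq V] [DecidableEq W]
    (Y : Fin t → Finset V) (Z : Fin t → Finset W)
    (hY : ∀ i j, i ≠ j → Disjoint (Y i) (Y j))
    (hZ : ∀ i j, i ≠ j → Disjoint (Z i) (Z j))
    (g : Fin t → MvPolynomial (V ⊕ W) F)
    (hsupp : ∀ i, g i ∈ MvPolynomial.supported F
      ((Sum.inl '' ↑(Y i)) ∪ (Sum.inr '' ↑(Z i))))
    (hml : ∀ i, IsMultilinearPoly (g i)) :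
    ((pdMatrix F (Finset.univ.biUnion Y) (Finset.univ.biUnion Z) (∏ i, g i)).rank : ℝ)
      ≤ (2 : ℝ) ^ ((((Finset.univ.biUnion Y).card : ℝ) +
          ((Finset.univ.biUnion Z).card : ℝ) -
          ((Finset.univ.filter fun i => (Y i).card ≠ (Z i).card).card : ℝ)) / 2) :=
  stmt_18_general F t Y Z hY hZ g hsupp
end
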